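/- Let R = ℂ[[x,y]]/(xy) and let ω₁ = f₁ ξ, ω₂ = f₂ ξ be two local sections of the dualizing module (ξ a local generator, f₁, f₂ ∈ R). If f₁ f₂ = 0 in R (so the quadric ω₁⊗ω₂ + ω₂⊗ω₁ vanishes on the curve), and f₁ = a(x), f₂ = b(y) with a(0) = b(0) = 0, then the image df₁·df₂·ξ^{⊗2} of the quadric under the local 2nd Gaussian map lies in the torsion submodule of Sym²(Ω¹_R)⊗(dualizing)^{⊗2}, and its component in T_p ≅ ℂ·dxdy ⊕ ℂ·x dxdy ⊕ ℂ·y dxdy has coordinates (a'(0)b'(0), a''(0)b'(0), a'(0)b''(0)) up to the factor from ξ^{⊗2} and constants. -/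

import Mathlib

set_option synthInstance.maxHeartbeats 2000000
set_option maxHeartbeats 2000000

noncomputable section
open scoped TensorProduct

/-- `ℂ[[x,y]]`. -/
abbrev PS : Type := MvPowerSeries (Fin 2) ℂ

/-- The local ring of a node: `R = ℂ[[x,y]]/(xy)`. -/
abbrev NodeRing : Type :=
  PS ⧸ Ideal.span {(MvPowerSeries.X 0 : PS) * MvPowerSeries.X 1}

/-- The module of Kähler differentials `Ω¹_R` of `R` over `ℂ`. -/
abbrev OmegaR : Type := Ω[NodeRing⁄ℂ]

/-- The symmetrizing relations in `Ω¹ ⊗_R Ω¹`. -/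
def symRel : Submodule NodeRing (OmegaR ⊗[NodeRing] OmegaR) :=
  Submodule.span NodeRing {z | ∃ a b : OmegaR, z = a ⊗ₜ b - b ⊗ₜ a}

/-- The second symmetric power `Sym²(Ω¹_R)`. -/
abbrev Sym2Omega : Type := (OmegaR ⊗[NodeRing] OmegaR) ⧸ symRel

/-- The symmetric product of two differentials. -/
def sp (a b : OmegaR) : Sym2Omega := Submodule.Quotient.mk (a ⊗ₜ b)

/-- The class of `x` in `R`. -/
def xx : NodeRing := Ideal.Quotient.mk _ (MvPowerSeries.X 0)

/-- The class of `y` in `R`. -/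
def yy : NodeRing := Ideal.Quotient.mk _ (MvPowerSeries.X 1)

/-- The universal derivation `d : R → Ω¹_R`. -/
def dd : Derivation ℂ NodeRing OmegaR := KaehlerDifferential.D ℂ NodeRing

/-- `dx·dy ∈ Sym²(Ω¹_R)`. -/
def e1 : Sym2Omega := sp (dd xx) (dd yy)

/-- `x·dx·dy ∈ Sym²(Ω¹_R)`. -/
def e2 : Sym2Omega := xx • e1

/-- `y·dx·dy ∈ Sym²(Ω¹_R)`. -/
def e3 : Sym2Omega := yy • e1

/-- The element `a(x) ∈ R` obtained from a one-variable power series `a ∈ ℂ[[x]]`. -/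
def phiX (F : PowerSeries ℂ) : NodeRing :=
  Ideal.Quotient.mk _
    (show PS from fun d => if d 1 = 0 then PowerSeries.coeff (d 0) F else 0)

/-- The element `b(y) ∈ R` obtained from a one-variable power series `b ∈ ℂ[[y]]`. -/
def phiY (F : PowerSeries ℂ) : NodeRing :=
  Ideal.Quotient.mk _
    (show PS from fun d => if d 0 = 0 then PowerSeries.coeff (d 1) F else 0)

/-- The value at `0` of the formal derivative of `a ∈ ℂ[[X]]`, i.e. `a'(0)`. -/
def d1 (a : PowerSeries ℂ) : ℂ :=
  PowerSeries.constantCoeff (PowerSeries.derivative ℂ a)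

/-- The value at `0` of the second formal derivative of `a ∈ ℂ[[X]]`, i.e. `a''(0)`. -/
def d2 (a : PowerSeries ℂ) : ℂ :=
  PowerSeries.constantCoeff (PowerSeries.derivative ℂ (PowerSeries.derivative ℂ a))

/-! Since `xy = 0` in `R`, Leibniz gives `y dx = -x dy`, hence `x² dy = -xy dx = 0` and
`y² dx = 0`. Writing `a = a₀ + a₁X + a₂X² + X³r` gives `d a(x) = (a₁ + 2a₂x) dx + x²·(…)`, and
similarly for `b(y)`; in `d a(x) · d b(y)` every term carrying `x²` or `y²` dies, as does `xy`,
leaving `(a₁b₁ + 2a₂b₁ x + 2a₁b₂ y) dx dy`. Finally `(x + y)² = x² + y²` annihilates `dx dy`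
and `x + y` is a non-zero-divisor of `R`, so this element is torsion. -/

section Derivation

variable {k R M N : Type*} [CommRing k] [CommRing R] [Algebra k R] [AddCommGroup M]
  [Module R M] [Module k M] [AddCommGroup N] [Module R N]

theorem Derivation.sq_smul_eq_zero_of_mul_eq_zero (D : Derivation k R M) {x y : R}
    (hxy : x * y = 0) : x ^ 2 • D y = 0 := by
  have h := D.leibniz x y
  rw [hxy, map_zero] at h
  rw [sq, mul_smul, eq_neg_of_add_eq_zero_left h.symm, smul_neg, smul_smul, hxy, zero_smul,
    neg_zero]

theorem Derivation.exists_map_cubic_eq (D : Derivation k R M) (c₀ c₁ c₂ : k) (x r : R) :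
    ∃ m : M,
      D (algebraMap k R c₀ + algebraMap k R c₁ * x + algebraMap k R c₂ * x ^ 2 + x ^ 3 * r) =
        (algebraMap k R c₁ + 2 * algebraMap k R c₂ * x) • D x + x ^ 2 • m := by
  refine ⟨(3 * r) • D x + x • D r, ?_⟩
  simp only [map_add, D.leibniz, D.leibniz_pow, D.map_algebraMap]
  module

theorem LinearMap.map_derivation_eq_of_mul_eq_zero (D : Derivation k R M)
    (B : M →ₗ[R] M →ₗ[R] N) {x y f g u v : R} {m n : M} (hxy : x * y = 0)
    (hf : D f = u • D x + x ^ 2 • m) (hg : D g = v • D y + y ^ 2 • n) :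
    B (D f) (D g) = (u * v) • B (D x) (D y) := by
  have hx : x ^ 2 • D y = 0 := D.sq_smul_eq_zero_of_mul_eq_zero hxy
  have hy : y ^ 2 • D x = 0 := D.sq_smul_eq_zero_of_mul_eq_zero (by rw [mul_comm, hxy])
  have hxg : x ^ 2 • D g = 0 := by
    rw [hg, smul_add, smul_comm, hx, smul_zero, smul_smul, ← mul_pow, hxy, zero_pow two_ne_zero,
      zero_smul, add_zero]
  calc B (D f) (D g) = u • B (D x) (D g) := by
        rw [hf, map_add₂, map_smul₂, map_smul₂, ← map_smul (B m), hxg, map_zero, add_zero]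
    _ = (u * v) • B (D x) (D y) := by
        rw [hg, map_add, map_smul, map_smul (B (D x)) (y ^ 2), ← map_smul₂ B (y ^ 2), hy,
          map_zero₂, add_zero, smul_smul]

theorem LinearMap.add_sq_smul_map_derivation_eq_zero (D : Derivation k R M)
    (B : M →ₗ[R] M →ₗ[R] N) {x y : R} (hxy : x * y = 0) :
    (x + y) ^ 2 • B (D x) (D y) = 0 := by
  calc (x + y) ^ 2 • B (D x) (D y) = B (D x) (x ^ 2 • D y) + B (y ^ 2 • D x) (D y) := by
        rw [add_sq, mul_assoc, hxy, mul_zero, add_zero, add_smul, map_smul, map_smul₂]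
    _ = 0 := by
        rw [D.sq_smul_eq_zero_of_mul_eq_zero hxy,
          D.sq_smul_eq_zero_of_mul_eq_zero (by rw [mul_comm, hxy]), map_zero, map_zero₂,
          add_zero]

end Derivation

theorem add_mul_add_smul_of_mul_eq_zero {k R M : Type*} [CommRing k] [CommRing R] [Algebra k R]
    [AddCommGroup M] [Module R M] [Module k M] [IsScalarTower k R M] {x y : R} (hxy : x * y = 0)
    (a₁ a₂ b₁ b₂ : k) (e : M) :
    ((algebraMap k R a₁ + algebraMap k R a₂ * x) *
        (algebraMap k R b₁ + algebraMap k R b₂ * y)) • e =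
      (a₁ * b₁) • e + (a₂ * b₁) • x • e + (a₁ * b₂) • y • e := by
  simp only [← algebraMap_smul R (_ : k), smul_smul, ← add_smul, map_mul]
  congr 1
  linear_combination (algebraMap k R a₂ * algebraMap k R b₂) * hxy

theorem Finsupp.fin_two_eq_single_iff {i j : Fin 2} (hij : i ≠ j) (m : Fin 2 →₀ ℕ) (k : ℕ) :
    m = Finsupp.single i k ↔ m i = k ∧ m j = 0 := by
  have hcover : ∀ t : Fin 2, t = i ∨ t = j := by omega
  constructor
  · rintro rfl
    simp [hij.symm]
  · rintro ⟨hi, hj⟩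
    ext t
    rcases hcover t with rfl | rfl <;> simp [hi, hj, hij.symm]

namespace PowerSeries

variable {R : Type*} [CommRing R]

/-- `F(X i)`, when `j` is the other variable. -/
def toMvVar (i j : Fin 2) (F : PowerSeries R) : MvPowerSeries (Fin 2) R :=
  fun d => if d j = 0 then coeff (d i) F else 0

theorem coeff_toMvVar (i j : Fin 2) (F : PowerSeries R) (d : Fin 2 →₀ ℕ) :
    MvPowerSeries.coeff d (toMvVar i j F) = if d j = 0 then coeff (d i) F else 0 :=
  rfl

end PowerSeries

namespace MvPowerSeries

section

variable {σ R : Type*} [CommRing R] {i j : σ}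

theorem X_dvd_of_X_dvd_mul_X (hij : i ≠ j) {F : MvPowerSeries σ R} (h : X i ∣ F * X j) :
    X i ∣ F := by
  rw [X_dvd_iff] at h ⊢
  intro m hm
  have := h (m + Finsupp.single j 1) (by simp [hm, hij])
  rwa [X_def, coeff_add_mul_monomial, mul_one] at this

theorem X_dvd_of_X_mul_X_dvd_mul_add (hij : i ≠ j) {F : MvPowerSeries σ R}
    (h : X i * X j ∣ F * (X i + X j)) : X i ∣ F := by
  refine X_dvd_of_X_dvd_mul_X hij ((dvd_add_right (dvd_mul_left (X i) F)).1 ?_)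
  rw [← mul_add]
  exact (dvd_mul_right _ _).trans h

theorem X_add_X_mem_nonZeroDivisors (hij : i ≠ j) :
    Ideal.Quotient.mk (Ideal.span {X i * X j}) (X i + X j : MvPowerSeries σ R) ∈
      nonZeroDivisors (MvPowerSeries σ R ⧸ Ideal.span {X i * X j}) := by
  rw [mem_nonZeroDivisors_iff_right]
  rintro g hg
  obtain ⟨F, rfl⟩ := Ideal.Quotient.mk_surjective g
  rw [← map_mul] at hg
  rw [Ideal.Quotient.eq_zero_iff_mem, Ideal.mem_span_singleton] at hg ⊢
  have hj : X j ∣ F :=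
    X_dvd_of_X_mul_X_dvd_mul_add hij.symm (by rwa [mul_comm (X j), add_comm (X j)])
  obtain ⟨G, rfl⟩ := X_dvd_of_X_mul_X_dvd_mul_add hij hg
  exact mul_dvd_mul_left _ (X_dvd_of_X_dvd_mul_X hij.symm (by rwa [mul_comm] at hj))

end

open PowerSeries (toMvVar) in
theorem X_pow_three_dvd_toMvVar_sub {R : Type*} [CommRing R] {i j : Fin 2} (hij : i ≠ j)
    (F : PowerSeries R) :
    (X i ^ 3 : MvPowerSeries (Fin 2) R) ∣ toMvVar i j F -
      (C (PowerSeries.coeff 0 F) + C (PowerSeries.coeff 1 F) * X i +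
        C (PowerSeries.coeff 2 F) * X i ^ 2) := by
  rw [X_pow_dvd_iff]
  intro m hm
  have hzero : m = 0 ↔ m i = 0 ∧ m j = 0 := by
    rw [← Finsupp.single_zero i, Finsupp.fin_two_eq_single_iff hij]
  classical
  simp only [map_sub, map_add, coeff_C_mul, coeff_C, coeff_X, coeff_X_pow, hzero,
    Finsupp.fin_two_eq_single_iff hij, PowerSeries.coeff_toMvVar]
  by_cases hj : m j = 0
  · interval_cases m i <;> simp [hj]
  · simp [hj]

end MvPowerSeries

theorem Ideal.Quotient.exists_mk_toMvVar_eq {k : Type*} [CommRing k] {i j : Fin 2} (hij : i ≠ j)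
    (I : Ideal (MvPowerSeries (Fin 2) k)) (F : PowerSeries k) :
    ∃ r, Ideal.Quotient.mk I (PowerSeries.toMvVar i j F) =
      algebraMap k _ (PowerSeries.coeff 0 F) +
        algebraMap k _ (PowerSeries.coeff 1 F) * Ideal.Quotient.mk I (MvPowerSeries.X i) +
        algebraMap k _ (PowerSeries.coeff 2 F) * Ideal.Quotient.mk I (MvPowerSeries.X i) ^ 2 +
        Ideal.Quotient.mk I (MvPowerSeries.X i) ^ 3 * r := by
  obtain ⟨G, hG⟩ := MvPowerSeries.X_pow_three_dvd_toMvVar_sub hij F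
  refine ⟨Ideal.Quotient.mk I G, ?_⟩
  rw [sub_eq_iff_eq_add'.1 hG]
  simp only [map_add, map_mul, map_pow, ← Ideal.Quotient.mk_algebraMap,
    MvPowerSeries.algebraMap_apply, Algebra.algebraMap_self, RingHom.id_apply]

theorem d1_eq_coeff_one (a : PowerSeries ℂ) : d1 a = PowerSeries.coeff 1 a := by
  rw [d1, ← PowerSeries.coeff_zero_eq_constantCoeff, PowerSeries.coeff_derivative]
  norm_num

theorem d2_eq_two_mul_coeff_two (a : PowerSeries ℂ) : d2 a = 2 * PowerSeries.coeff 2 a := by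
  rw [d2, ← PowerSeries.coeff_zero_eq_constantCoeff, PowerSeries.coeff_derivative,
    PowerSeries.coeff_derivative]
  norm_num
  ring

theorem xx_mul_yy : xx * yy = 0 := by
  rw [xx, yy, ← map_mul, Ideal.Quotient.eq_zero_iff_mem]
  exact Ideal.subset_span rfl

theorem xx_add_yy_mem_nonZeroDivisors : xx + yy ∈ nonZeroDivisors NodeRing := by
  have h := MvPowerSeries.X_add_X_mem_nonZeroDivisors (R := ℂ) (by decide : (0 : Fin 2) ≠ 1)
  rwa [map_add] at h

theorem exists_dd_phiX (a : PowerSeries ℂ) :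
    ∃ m, dd (phiX a) =
      (algebraMap ℂ NodeRing (d1 a) + algebraMap ℂ NodeRing (d2 a) * xx) • dd xx + xx ^ 2 • m := by
  obtain ⟨r, hr⟩ := Ideal.Quotient.exists_mk_toMvVar_eq (by decide : (0 : Fin 2) ≠ 1) _ a
  change ∃ m, dd (Ideal.Quotient.mk _ (PowerSeries.toMvVar 0 1 a)) = _
  rw [hr, d1_eq_coeff_one, d2_eq_two_mul_coeff_two, map_mul, map_ofNat]
  exact dd.exists_map_cubic_eq _ _ _ xx r

theorem exists_dd_phiY (b : PowerSeries ℂ) :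
    ∃ n, dd (phiY b) =
      (algebraMap ℂ NodeRing (d1 b) + algebraMap ℂ NodeRing (d2 b) * yy) • dd yy + yy ^ 2 • n := by
  obtain ⟨r, hr⟩ := Ideal.Quotient.exists_mk_toMvVar_eq (by decide : (1 : Fin 2) ≠ 0) _ b
  change ∃ n, dd (Ideal.Quotient.mk _ (PowerSeries.toMvVar 1 0 b)) = _
  rw [hr, d1_eq_coeff_one, d2_eq_two_mul_coeff_two, map_mul, map_ofNat]
  exact dd.exists_map_cubic_eq _ _ _ yy r

def symProd : OmegaR →ₗ[NodeRing] OmegaR →ₗ[NodeRing] Sym2Omega :=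
  (TensorProduct.mk NodeRing OmegaR OmegaR).compr₂ symRel.mkQ

theorem gaussian_torsion_coordinates_general (a b : PowerSeries ℂ) :
    sp (dd (phiX a)) (dd (phiY b)) ∈ Submodule.torsion NodeRing Sym2Omega ∧
      sp (dd (phiX a)) (dd (phiY b)) =
        (d1 a * d1 b) • e1 + (d2 a * d1 b) • e2 + (d1 a * d2 b) • e3 := by
  obtain ⟨m, hm⟩ := exists_dd_phiX a
  obtain ⟨n, hn⟩ := exists_dd_phiY b
  have hsp := symProd.map_derivation_eq_of_mul_eq_zero dd xx_mul_yy hm hn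
  change sp _ _ = _ • e1 at hsp
  have htors : (xx + yy) ^ 2 • e1 = 0 :=
    symProd.add_sq_smul_map_derivation_eq_zero dd xx_mul_yy
  refine ⟨(Submodule.mem_torsion_iff _).2
    ⟨⟨(xx + yy) ^ 2, pow_mem xx_add_yy_mem_nonZeroDivisors 2⟩, ?_⟩, ?_⟩
  · rw [Submonoid.mk_smul, hsp, smul_comm, htors, smul_zero]
  · rw [hsp, add_mul_add_smul_of_mul_eq_zero xx_mul_yy, e2, e3]

/-- in `R = ℂ[[x,y]]/(xy)`, let `f₁ = a(x)` and `f₂ = b(y)` with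
`a(0) = b(0) = 0` (so `f₁ f₂ = 0`). Then the symmetric product `df₁·df₂` lies in the
torsion submodule of `Sym²(Ω¹_R)`, and on the basis `dx·dy, x·dx·dy, y·dx·dy` of the
torsion it has coordinates `(a'(0)b'(0), a''(0)b'(0), a'(0)b''(0))`. -/
theorem gaussian_torsion_coordinates (a b : PowerSeries ℂ)
    (ha : PowerSeries.constantCoeff a = 0) (hb : PowerSeries.constantCoeff b = 0)
    (hprod : phiX a * phiY b = 0) :
    sp (dd (phiX a)) (dd (phiY b)) ∈ Submodule.torsion NodeRing Sym2Omega ∧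
      sp (dd (phiX a)) (dd (phiY b)) =
        (d1 a * d1 b) • e1 + (d2 a * d1 b) • e2 + (d1 a * d2 b) • e3 :=
  gaussian_torsion_coordinates_general a b
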